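/- arXiv:2507.19443 — 2 statements merged into one kernel-verified Lean document; each statement's English description precedes it below -/
import Mathlib

section
/- Let W₁, W₂ : ℝ → (0,∞) be weights with |∂ₓ(W₁W₂)(x)| ≲ W₁(x)² and W₂(x) ≲ (1+x²)^{1/2}·W₁(x) for all x, and set W = W₁^{1/2}W₂^{1/2}. If f : ℝ → ℝ satisfies W₁f ∈ L²(ℝ) and W₂f' ∈ L²(ℝ), then Wf ∈ L^∞(ℝ), ‖Wf‖_{L^∞} ≲ ‖W₁f‖_{L²} + ‖W₂f'‖_{L²}, and moreover W(x)f(x) → 0 as |x| → ∞. -/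
/-!
Set `g = W₁ W₂ f²`. Its derivative `∂ₓ(W₁W₂) f² + 2 W₁W₂ f f'` is bounded pointwise by
`(A₁ + 1) (W₁f)² + (W₂f')²` (Cauchy–Schwarz on the cross term), so `g' ∈ L¹` and `g`
has limits at `±∞`. Both limits vanish, since `g ≲ √(1 + x²) (W₁f)²` and a nonzero limit
would make `1/|x|` integrable at infinity. Hence `g(x) = -∫_x^∞ g'` is bounded by
`‖g'‖_{L¹}`, which gives the `L^∞` bound on `Wf = √g`, and `√g → 0` at infinity.
-/

open MeasureTheory Filter Set Topology

/-- The `L²(ℝ)` norm. -/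
noncomputable def L2 (f : ℝ → ℝ) : ℝ := (∫ x : ℝ, (f x) ^ 2) ^ (1 / 2 : ℝ)

lemma L2_nonneg (f : ℝ → ℝ) : 0 ≤ L2 f := by
  rw [L2, ← Real.sqrt_eq_rpow]
  exact Real.sqrt_nonneg _

lemma sq_L2 (f : ℝ → ℝ) : L2 f ^ 2 = ∫ x, f x ^ 2 := by
  rw [L2, ← Real.sqrt_eq_rpow, Real.sq_sqrt (integral_nonneg fun x => sq_nonneg _)]

lemma eq_zero_of_tendsto_atTop_of_abs_le_sqrt_mul {g h : ℝ → ℝ} {L : ℝ}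
    (hg : Tendsto g atTop (𝓝 L)) (hh : Integrable h)
    (hbd : ∀ x, |g x| ≤ √(1 + x ^ 2) * h x) : L = 0 := by
  by_contra hL
  have hL₀ : 0 < |L| := abs_pos.2 hL
  obtain ⟨M, hM⟩ := eventually_atTop.1 (hg.abs.eventually_const_lt (half_lt_self hL₀))
  have hinv_le : ∀ x ∈ Ioi (max M 1), x⁻¹ ≤ 4 / |L| * h x := by
    intro x hx
    have hx₁ : 1 ≤ x := (le_max_right _ _).trans hx.le
    have hsqrt : √(1 + x ^ 2) ≤ 2 * x :=
      Real.sqrt_le_iff.2 ⟨by linarith, by nlinarith⟩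
    have hgx : |L| / 2 < √(1 + x ^ 2) * h x :=
      (hM x ((le_max_left _ _).trans hx.le)).trans_le (hbd x)
    have hhx : 0 ≤ h x := by
      by_contra! hneg
      nlinarith [Real.sqrt_nonneg (1 + x ^ 2)]
    have hgx' : |L| / 2 < 2 * x * h x := hgx.trans_le (by gcongr)
    calc x⁻¹ = 4 / |L| * (|L| / 4 / x) := by field_simp
      _ ≤ 4 / |L| * h x := by
        gcongr
        rw [div_le_iff₀ (by linarith)]
        linarith
  have hinv : IntegrableOn (fun x : ℝ => x⁻¹) (Ioi (max M 1)) := by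
    refine ((hh.const_mul (4 / |L|)).integrableOn).mono' measurable_inv.aestronglyMeasurable ?_
    refine (ae_restrict_iff' measurableSet_Ioi).2 (Eventually.of_forall fun x hx => ?_)
    have hx₀ : 0 < x := lt_of_lt_of_le one_pos ((le_max_right _ _).trans hx.le)
    rw [Real.norm_eq_abs, abs_of_pos (inv_pos.2 hx₀)]
    exact hinv_le x hx
  exact not_integrableOn_Ioi_inv hinv

section IntegrableDeriv

variable {g g' h : ℝ → ℝ}

lemma tendsto_atTop_zero_of_integrable_deriv_of_abs_le_sqrt_mul
    (hg : ∀ x, HasDerivAt g (g' x) x) (hg' : Integrable g') (hh : Integrable h)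
    (hbd : ∀ x, |g x| ≤ √(1 + x ^ 2) * h x) : Tendsto g atTop (𝓝 0) := by
  have hlim := tendsto_limUnder_of_hasDerivAt_of_integrableOn_Ioi (a := 0)
    (fun x _ => hg x) hg'.integrableOn
  rwa [eq_zero_of_tendsto_atTop_of_abs_le_sqrt_mul hlim hh hbd] at hlim

lemma tendsto_cocompact_zero_of_integrable_deriv_of_abs_le_sqrt_mul
    (hg : ∀ x, HasDerivAt g (g' x) x) (hg' : Integrable g') (hh : Integrable h)
    (hbd : ∀ x, |g x| ≤ √(1 + x ^ 2) * h x) : Tendsto g (cocompact ℝ) (𝓝 0) := by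
  have htop := tendsto_atTop_zero_of_integrable_deriv_of_abs_le_sqrt_mul hg hg' hh hbd
  have hneg : Tendsto (fun x => g (-x)) atTop (𝓝 0) := by
    refine tendsto_atTop_zero_of_integrable_deriv_of_abs_le_sqrt_mul (g' := fun x => -g' (-x))
      (fun x => ?_) hg'.comp_neg.neg hh.comp_neg (fun x => by simpa using hbd (-x))
    simpa [Function.comp_def] using (hg (-x)).comp x (hasDerivAt_neg x)
  have hbot : Tendsto g atBot (𝓝 0) := by
    simpa [Function.comp_def] using hneg.comp tendsto_neg_atBot_atTop
  rw [cocompact_eq_atBot_atTop]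
  exact hbot.sup htop

end IntegrableDeriv

lemma norm_le_integral_norm_deriv_of_tendsto_atTop_zero {E : Type*} [NormedAddCommGroup E]
    [NormedSpace ℝ E] [CompleteSpace E] {g g' : ℝ → E}
    (hg : ∀ x, HasDerivAt g (g' x) x) (hg' : Integrable g') (hlim : Tendsto g atTop (𝓝 0))
    (x : ℝ) : ‖g x‖ ≤ ∫ y, ‖g' y‖ := by
  have hFTC : ∫ y in Ioi x, g' y = 0 - g x :=
    integral_Ioi_of_hasDerivAt_of_tendsto' (fun y _ => hg y) hg'.integrableOn hlim
  calc ‖g x‖ = ‖∫ y in Ioi x, g' y‖ := by rw [hFTC, zero_sub, norm_neg]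
    _ ≤ ∫ y in Ioi x, ‖g' y‖ := norm_integral_le_integral_norm _
    _ ≤ ∫ y, ‖g' y‖ :=
      setIntegral_le_integral hg'.norm (Eventually.of_forall fun _ => norm_nonneg _)

lemma abs_deriv_mul_sq_add_le {d w₁ w₂ u v A : ℝ} (hd : |d| ≤ A * w₁ ^ 2) :
    |d * u ^ 2 + w₁ * w₂ * (2 * u * v)| ≤ (A + 1) * (w₁ * u) ^ 2 + (w₂ * v) ^ 2 := by
  have hcross : |w₁ * w₂ * (2 * u * v)| ≤ (w₁ * u) ^ 2 + (w₂ * v) ^ 2 := by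
    rw [show w₁ * w₂ * (2 * u * v) = 2 * (w₁ * u) * (w₂ * v) by ring]
    exact abs_le.2 ⟨by nlinarith [sq_nonneg (w₁ * u + w₂ * v)], two_mul_le_add_sq _ _⟩
  have hfirst : |d * u ^ 2| ≤ A * (w₁ * u) ^ 2 := by
    rw [abs_mul, abs_of_nonneg (sq_nonneg u), mul_pow, ← mul_assoc]
    exact mul_le_mul_of_nonneg_right hd (sq_nonneg u)
  calc _ ≤ |d * u ^ 2| + |w₁ * w₂ * (2 * u * v)| := abs_add_le _ _
    _ ≤ _ := by linarith

/-- let `W₁, W₂ : ℝ → (0,∞)` with `|∂ₓ(W₁W₂)| ≲ W₁²` and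
`W₂ ≲ (1+x²)^{1/2} W₁`, and set `W = W₁^{1/2} W₂^{1/2}`.  If `W₁ f ∈ L²` and `W₂ f' ∈ L²`,
then `Wf ∈ L^∞` with `‖Wf‖_{L^∞} ≲ ‖W₁f‖_{L²} + ‖W₂f'‖_{L²}` and `W(x)f(x) → 0` as
`|x| → ∞`. -/
theorem stmt10 (W₁ W₂ D : ℝ → ℝ) (A₁ A₂ : ℝ)
    (hW₁pos : ∀ x, 0 < W₁ x) (hW₂pos : ∀ x, 0 < W₂ x)
    (hD : ∀ x : ℝ, HasDerivAt (fun t => W₁ t * W₂ t) (D x) x)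
    (hDbd : ∀ x : ℝ, |D x| ≤ A₁ * (W₁ x) ^ 2)
    (hW₂bd : ∀ x : ℝ, W₂ x ≤ A₂ * (1 + x ^ 2) ^ (1 / 2 : ℝ) * W₁ x) :
    ∃ C : ℝ, ∀ f f' : ℝ → ℝ, (∀ x : ℝ, HasDerivAt f (f' x) x) →
      MemLp (fun x => W₁ x * f x) 2 volume →
      MemLp (fun x => W₂ x * f' x) 2 volume →
      (∀ x : ℝ, Real.sqrt (W₁ x * W₂ x) * |f x|
          ≤ C * (L2 (fun y => W₁ y * f y) + L2 (fun y => W₂ y * f' y))) ∧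
      Tendsto (fun x => Real.sqrt (W₁ x * W₂ x) * f x) (Filter.cocompact ℝ) (nhds 0) := by
  have hA₁ : 0 ≤ A₁ :=
    nonneg_of_mul_nonneg_left ((abs_nonneg _).trans (hDbd 0)) (pow_pos (hW₁pos 0) 2)
  refine ⟨√(A₁ + 1), fun f f' hf hf₁ hf₂ => ?_⟩
  set g : ℝ → ℝ := fun x => W₁ x * W₂ x * f x ^ 2
  set g' : ℝ → ℝ := fun x => D x * f x ^ 2 + W₁ x * W₂ x * (2 * f x * f' x)
  have hg : ∀ x, HasDerivAt g (g' x) x := fun x => by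
    refine ((hD x).mul ((hf x).pow 2)).congr_deriv ?_
    simp only [g', Pi.pow_apply]
    ring
  have hg'_le : ∀ x, |g' x| ≤ (A₁ + 1) * (W₁ x * f x) ^ 2 + (W₂ x * f' x) ^ 2 :=
    fun x => abs_deriv_mul_sq_add_le (hDbd x)
  have hdom : Integrable fun x => (A₁ + 1) * (W₁ x * f x) ^ 2 + (W₂ x * f' x) ^ 2 :=
    (hf₁.integrable_sq.const_mul _).add hf₂.integrable_sq
  have hg'_int : Integrable g' := by
    have hmeas : AEStronglyMeasurable g' volume := by
      rw [show g' = deriv g from funext fun x => (hg x).deriv.symm]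
      exact (measurable_deriv g).aestronglyMeasurable
    exact hdom.mono' hmeas (Eventually.of_forall hg'_le)
  have hg_nonneg : ∀ x, 0 ≤ g x := fun x =>
    mul_nonneg (mul_pos (hW₁pos x) (hW₂pos x)).le (sq_nonneg _)
  have hg_le : ∀ x, |g x| ≤ √(1 + x ^ 2) * (A₂ * (W₁ x * f x) ^ 2) := fun x => by
    rw [abs_of_nonneg (hg_nonneg x)]
    have := mul_le_mul_of_nonneg_left (hW₂bd x) (mul_nonneg (hW₁pos x).le (sq_nonneg (f x)))
    rw [← Real.sqrt_eq_rpow] at this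
    linarith
  have hg_lim : Tendsto g (cocompact ℝ) (𝓝 0) :=
    tendsto_cocompact_zero_of_integrable_deriv_of_abs_le_sqrt_mul hg hg'_int
      (hf₁.integrable_sq.const_mul A₂) hg_le
  have hWf : ∀ x, √(W₁ x * W₂ x) * |f x| = √(g x) := fun x => by
    rw [Real.sqrt_mul (mul_pos (hW₁pos x) (hW₂pos x)).le, Real.sqrt_sq_eq_abs]
  set a := L2 fun y => W₁ y * f y
  set b := L2 fun y => W₂ y * f' y
  have ha : 0 ≤ a := L2_nonneg _
  have hb : 0 ≤ b := L2_nonneg _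
  have hg'_L1 : ∫ y, |g' y| ≤ (A₁ + 1) * a ^ 2 + b ^ 2 := by
    rw [sq_L2, sq_L2, ← integral_const_mul, ← integral_add (hf₁.integrable_sq.const_mul _)
      hf₂.integrable_sq]
    exact integral_mono hg'_int.abs hdom hg'_le
  refine ⟨fun x => ?_, ?_⟩
  · have hgx : g x ≤ (A₁ + 1) * (a + b) ^ 2 := by
      have := norm_le_integral_norm_deriv_of_tendsto_atTop_zero hg hg'_int
        (hg_lim.mono_left atTop_le_cocompact) x
      simp only [Real.norm_eq_abs, abs_of_nonneg (hg_nonneg x)] at this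
      nlinarith [mul_nonneg ha hb]
    rw [hWf, ← Real.sqrt_sq (add_nonneg ha hb), ← Real.sqrt_mul (by linarith)]
    exact Real.sqrt_le_sqrt hgx
  · refine squeeze_zero_norm (fun x => ?_) (by simpa using hg_lim.sqrt)
    rw [Real.norm_eq_abs, abs_mul, abs_of_nonneg (Real.sqrt_nonneg _), hWf]
end

section
/- Let χ_δ(x) = χ(δx) with χ smooth, supported in [−1,1], and let J_δ be mollification at scale δ, v ∈ L²_w(ℝ) with w ≳ (1+x²)^{-1/1000}. For |x| ≥ 3/δ, the commutator satisfies the kernel formula ([χ_δ, iℍ]J_δ v)_{xxx}(x) = 6∫ χ_δ(y)·(x−y)^{-4}·J_δv(y) dy, and consequently |([χ_δ,iℍ]J_δ v)_{xxx}(x)| ≲ (δ/x²)·‖v‖_{L²_w} for |x| ≥ 3/δ. -/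
open MeasureTheory Filter
open Metric Topology

/-- Mollification at scale `δ`: `J_δ f = φ_δ * f` with `φ_δ(x) = δ⁻¹ φ(x/δ)`. -/
noncomputable def Jmol (φ : ℝ → ℝ) (δ : ℝ) (f : ℝ → ℝ) (x : ℝ) : ℝ :=
  ∫ y : ℝ, δ⁻¹ * φ ((x - y) / δ) * f y


lemma aux_kernel_deriv (g : ℝ → ℝ) (hg : Integrable g) (R : ℝ)
    (hsupp : ∀ y : ℝ, R < |y| → g y = 0) (m : ℕ) (z₀ r : ℝ) (hr : 0 < r)
    (hsep : ∀ z y : ℝ, |z - z₀| < r → |y| ≤ R → 1 ≤ |z - y|) :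
    HasDerivAt (fun z => ∫ y : ℝ, g y / (z - y) ^ (m + 1))
      (-(m + 1 : ℝ) * ∫ y : ℝ, g y / (z₀ - y) ^ (m + 2)) z₀ := by
  have habs : ∀ (k : ℕ) (z y : ℝ), |z - z₀| < r → |g y / (z - y) ^ (k + 1)| ≤ |g y| := by
    intro k z y hz
    by_cases hy : R < |y|
    · simp [hsupp y hy]
    · push_neg at hy
      have h1 : 1 ≤ |z - y| := hsep z y hz hy
      rw [abs_div, abs_pow]
      exact div_le_self (abs_nonneg _) (one_le_pow₀ h1)
  have hmeas : ∀ (k : ℕ) (z : ℝ),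
      AEStronglyMeasurable (fun y => g y / (z - y) ^ (k + 1)) volume := by
    intro k z
    exact (hg.1.aemeasurable.div
      (((measurable_id.const_sub z).pow_const (k + 1)).aemeasurable)).aestronglyMeasurable
  have hz₀ : |z₀ - z₀| < r := by simpa using hr
  have key := hasDerivAt_integral_of_dominated_loc_of_deriv_le (μ := volume)
      (F := fun z y => g y / (z - y) ^ (m + 1))
      (F' := fun z y => -(m + 1 : ℝ) * (g y / (z - y) ^ (m + 2)))
      (x₀ := z₀) (bound := fun y => (m + 1 : ℝ) * |g y|) (Metric.ball_mem_nhds z₀ hr)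
      (Eventually.of_forall fun z => hmeas m z)
      (hg.mono (hmeas m z₀) (Eventually.of_forall fun y => by
        rw [Real.norm_eq_abs, Real.norm_eq_abs]; exact habs m z₀ y hz₀))
      ((hmeas (m + 1) z₀).const_mul _)
      (Eventually.of_forall fun y => by
        intro z hz
        rw [Metric.mem_ball, Real.dist_eq] at hz
        have := habs (m + 1) z y hz
        rw [Real.norm_eq_abs, abs_mul]
        calc |(-(m + 1 : ℝ))| * |g y / (z - y) ^ (m + 2)|
            ≤ |(-(m + 1 : ℝ))| * |g y| := by
              exact mul_le_mul_of_nonneg_left this (abs_nonneg _)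
          _ = (m + 1 : ℝ) * |g y| := by
              rw [abs_neg, abs_of_nonneg (by positivity)])
      ((hg.abs).const_mul _)
      (Eventually.of_forall fun y => by
        intro z hz
        rw [Metric.mem_ball, Real.dist_eq] at hz
        by_cases hy : R < |y|
        · simp only [hsupp y hy, zero_div, mul_zero]
          exact hasDerivAt_const z 0
        · push_neg at hy
          have h1 : 1 ≤ |z - y| := hsep z y hz hy
          have hne : z - y ≠ 0 := by
            intro h
            rw [h] at h1; simp at h1; linarith
          have hd : HasDerivAt (fun z => (z - y) ^ (m + 1))
              ((m + 1 : ℝ) * (z - y) ^ m) z := by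
            have := ((hasDerivAt_id z).sub_const y).pow (m + 1)
            simp at this; exact this
          have hinv := hd.inv (pow_ne_zero _ hne)
          have := hinv.const_mul (g y)
          have heq : (fun z => g y * ((z - y) ^ (m + 1))⁻¹)
              = fun z => g y / (z - y) ^ (m + 1) := by
            funext z; rw [div_eq_mul_inv]
          replace this : HasDerivAt (fun z => g y * ((z - y) ^ (m + 1))⁻¹) _ z := this
          rw [heq] at this
          refine this.congr_deriv (Eq.symm ?_)
          rw [div_eq_mul_inv]
          field_simp
          ring)
  have hfin := key.2
  refine hfin.congr_deriv (Eq.symm ?_)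
  rw [integral_const_mul]


lemma aux_chain (F1 F2 F3 F4 G : ℝ → ℝ) (x r : ℝ) (hr : 0 < r)
    (hG : ∀ z : ℝ, |z - x| < r → G z = -((1 / Real.pi) * F1 z))
    (h1 : ∀ z : ℝ, |z - x| < r → HasDerivAt F1 (-1 * F2 z) z)
    (h2 : ∀ z : ℝ, |z - x| < r → HasDerivAt F2 (-2 * F3 z) z)
    (h3 : ∀ z : ℝ, |z - x| < r → HasDerivAt F3 (-3 * F4 z) z) :
    iteratedDeriv 3 G x = (6 / Real.pi) * F4 x := by
  have hopen : IsOpen {z : ℝ | |z - x| < r} :=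
    isOpen_lt ((continuous_id.sub continuous_const).abs) continuous_const
  have hnb : ∀ z : ℝ, |z - x| < r → {w : ℝ | |w - x| < r} ∈ 𝓝 z :=
    fun z hz => hopen.mem_nhds hz
  have hx0 : |x - x| < r := by simpa using hr
  -- first derivative
  have d1 : ∀ z : ℝ, |z - x| < r → HasDerivAt G (-(1 / Real.pi) * (-1 * F2 z)) z := by
    intro z hz
    have hd := (h1 z hz).const_mul (1 / Real.pi)
    have hd2 := hd.neg
    refine hd2.congr_of_eventuallyEq ?_ |>.congr_deriv (by ring)
    filter_upwards [hnb z hz] with w hw using hG w hw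
  have e1 : ∀ z : ℝ, |z - x| < r → deriv G z = (1 / Real.pi) * F2 z := by
    intro z hz
    rw [(d1 z hz).deriv]; ring
  -- second derivative
  have d2 : ∀ z : ℝ, |z - x| < r → HasDerivAt (deriv G) ((1 / Real.pi) * (-2 * F3 z)) z := by
    intro z hz
    refine ((h2 z hz).const_mul (1 / Real.pi)).congr_of_eventuallyEq ?_
    filter_upwards [hnb z hz] with w hw using e1 w hw
  have e2 : ∀ z : ℝ, |z - x| < r → deriv (deriv G) z = -(2 / Real.pi) * F3 z := by
    intro z hz
    rw [(d2 z hz).deriv]; ring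
  -- third derivative
  have d3 : HasDerivAt (deriv (deriv G)) (-(2 / Real.pi) * (-3 * F4 x)) x := by
    refine ((h3 x hx0).const_mul (-(2 / Real.pi))).congr_of_eventuallyEq ?_
    filter_upwards [hnb x hx0] with w hw using e2 w hw
  rw [show (3 : ℕ) = 2 + 1 from rfl, iteratedDeriv_succ,
    show (2 : ℕ) = 1 + 1 from rfl, iteratedDeriv_succ, iteratedDeriv_one]
  rw [d3.deriv]; ring



lemma aux_L1_bound (φ χ w v : ℝ → ℝ) (δ : ℝ) (hδ : 0 < δ) (hδ1 : δ < 1)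
    (hφc : Continuous φ) (hφ0 : ∀ x, 0 ≤ φ x)
    (hφsupp : ∀ x : ℝ, x ∉ Set.Ioo (-1 : ℝ) 1 → φ x = 0)
    (hφint : (∫ x : ℝ, φ x) = 1)
    (hχ01 : ∀ x, 0 ≤ χ x ∧ χ x ≤ 1)
    (hχsupp : ∀ x : ℝ, x ∉ Set.Icc (-1 : ℝ) 1 → χ x = 0)
    (hw : ∀ x : ℝ, (1 + x ^ 2) ^ (-(1 / 1000) : ℝ) ≤ w x)
    (hu : MemLp (fun x => Real.sqrt (w x) * v x) 2 volume) :
    (∫ y : ℝ, |χ (δ * y) * Jmol φ δ v y|)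
      ≤ 4 / δ * L2 (fun y => Real.sqrt (w y) * v y) := by
  have hδi : (0:ℝ) < 1 / δ := by positivity
  have h1δ : (1:ℝ) ≤ 1 / δ := by rw [le_div_iff₀ hδ]; linarith
  have hsd : 0 < Real.sqrt δ := Real.sqrt_pos.mpr hδ
  set u : ℝ → ℝ := fun y => Real.sqrt (w y) * v y with hudef
  have husm := hu.aestronglyMeasurable
  set um : ℝ → ℝ := husm.mk u with humdef
  have hueq : u =ᵐ[volume] um := husm.ae_eq_mk
  have humsm : StronglyMeasurable um := husm.stronglyMeasurable_mk
  set s1 : Set ℝ := Set.Icc (-(1 / δ)) (1 / δ) with hs1def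
  set s2 : Set ℝ := Set.Icc (-(2 / δ)) (2 / δ) with hs2def
  set u₁ : ℝ → ℝ := fun t => s2.indicator (fun t => |um t|) t with hu₁def
  -- weight bound
  have hvb : ∀ t : ℝ, |t| ≤ 2 / δ → |v t| ≤ 2 / Real.sqrt δ * |u t| := by
    intro t ht
    have h1t : (1:ℝ) ≤ 1 + t ^ 2 := by nlinarith
    have h5 : 1 + t ^ 2 ≤ 9 / δ ^ 2 := by
      have ht2 : t ^ 2 ≤ (2 / δ) ^ 2 := by
        rw [← sq_abs t]; exact pow_le_pow_left₀ (abs_nonneg t) ht 2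
      have h1 : (1:ℝ) ≤ 1 / δ ^ 2 := by
        rw [le_div_iff₀ (by positivity)]; nlinarith
      have : (2 / δ) ^ 2 = 4 * (1 / δ ^ 2) := by ring
      have h9 : 9 / δ ^ 2 = 9 * (1 / δ ^ 2) := by ring
      nlinarith
    have hb1 : (1 + t ^ 2) ^ (-(1 / 2) : ℝ) ≤ (1 + t ^ 2) ^ (-(1 / 1000) : ℝ) :=
      Real.rpow_le_rpow_of_exponent_le h1t (by norm_num)
    have hb2 : (1 + t ^ 2) ^ (-(1 / 2) : ℝ) = (Real.sqrt (1 + t ^ 2))⁻¹ := by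
      rw [Real.rpow_neg (by positivity), Real.sqrt_eq_rpow]
    have hs3 : Real.sqrt (1 + t ^ 2) ≤ 3 / δ := by
      rw [show (3 / δ : ℝ) = Real.sqrt ((3 / δ) ^ 2) from (Real.sqrt_sq (by positivity)).symm]
      apply Real.sqrt_le_sqrt
      have : (3 / δ) ^ 2 = 9 / δ ^ 2 := by ring
      linarith
    have hspos : 0 < Real.sqrt (1 + t ^ 2) := Real.sqrt_pos.mpr (by nlinarith)
    have hwt : δ / 3 ≤ w t := by
      have hinv : δ / 3 ≤ (Real.sqrt (1 + t ^ 2))⁻¹ := by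
        rw [← one_div, le_div_iff₀ hspos]
        calc δ / 3 * Real.sqrt (1 + t ^ 2) ≤ δ / 3 * (3 / δ) :=
              mul_le_mul_of_nonneg_left hs3 (by positivity)
          _ = 1 := by field_simp
      calc δ / 3 ≤ (Real.sqrt (1 + t ^ 2))⁻¹ := hinv
        _ = (1 + t ^ 2) ^ (-(1 / 2) : ℝ) := hb2.symm
        _ ≤ (1 + t ^ 2) ^ (-(1 / 1000) : ℝ) := hb1
        _ ≤ w t := hw t
    have hsw : Real.sqrt δ / 2 ≤ Real.sqrt (w t) := by
      rw [show (Real.sqrt δ / 2 : ℝ) = Real.sqrt ((Real.sqrt δ / 2) ^ 2) from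
        (Real.sqrt_sq (by positivity)).symm]
      apply Real.sqrt_le_sqrt
      have hssq : (Real.sqrt δ) ^ 2 = δ := Real.sq_sqrt hδ.le
      nlinarith
    have hut : |u t| = Real.sqrt (w t) * |v t| := by
      simp only [hudef]
      rw [abs_mul, abs_of_nonneg (Real.sqrt_nonneg _)]
    rw [hut]
    have h2 := mul_le_mul_of_nonneg_right hsw (abs_nonneg (v t))
    calc |v t| = 2 / Real.sqrt δ * (Real.sqrt δ / 2 * |v t|) := by field_simp
      _ ≤ 2 / Real.sqrt δ * (Real.sqrt (w t) * |v t|) :=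
          mul_le_mul_of_nonneg_left h2 (by positivity)
  -- sup bound for φ
  have hφcs : HasCompactSupport φ := by
    apply HasCompactSupport.intro (isCompact_Icc (a := (-1:ℝ)) (b := 1))
    intro x hx
    exact hφsupp x (fun hmem => hx ⟨hmem.1.le, hmem.2.le⟩)
  obtain ⟨Mφ, hMφ⟩ := hφc.bounded_above_of_compact_support hφcs
  -- u₁ facts
  have hu₁m : Measurable u₁ := (humsm.measurable.abs).indicator measurableSet_Icc
  have hu₁nn : ∀ t, 0 ≤ u₁ t := fun t =>
    Set.indicator_nonneg (fun t _ => abs_nonneg _) t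
  have humsq : Integrable (fun t => um t ^ 2) volume :=
    (hu.integrable_sq).congr (by filter_upwards [hueq] with t ht; rw [ht])
  have hindint : Integrable (fun t => s2.indicator (fun _ => (1:ℝ)) t) volume := by
    rw [integrable_indicator_iff measurableSet_Icc]
    exact integrableOn_const measure_Icc_lt_top.ne
  have hu₁int : Integrable u₁ volume := by
    refine Integrable.mono' (hindint.add humsq) hu₁m.aestronglyMeasurable
      (Eventually.of_forall fun t => ?_)
    rw [Real.norm_eq_abs, abs_of_nonneg (hu₁nn t)]
    by_cases htm : t ∈ s2
    · simp only [Pi.add_apply, hu₁def, Set.indicator_of_mem htm]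
      nlinarith [sq_nonneg (|um t| - 1), sq_abs (um t)]
    · simp only [Pi.add_apply, hu₁def, Set.indicator_of_notMem htm]
      positivity
  -- Hölder
  have hL2nn : 0 ≤ L2 u := Real.rpow_nonneg (integral_nonneg fun t => sq_nonneg _) _
  have hvol2 : (volume s2).toReal = 4 / δ := by
    have h2δ : (0:ℝ) < 2 / δ := by positivity
    rw [hs2def, Real.volume_Icc, ENNReal.toReal_ofReal (by linarith)]
    ring
  have hholder : (∫ t : ℝ, u₁ t) ≤ 2 / Real.sqrt δ * L2 u := by
    have hcj : Real.HolderConjugate 2 2 := Real.HolderConjugate.two_two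
    have hf : MemLp (fun t => s2.indicator (fun _ => (1:ℝ)) t) (ENNReal.ofReal 2) volume := by
      rw [show ENNReal.ofReal 2 = 2 by simp]
      exact memLp_indicator_const 2 measurableSet_Icc (1:ℝ) (Or.inr measure_Icc_lt_top.ne)
    have hgm : MemLp (fun t => |um t|) (ENNReal.ofReal 2) volume := by
      rw [show ENNReal.ofReal 2 = 2 by simp]
      have := (hu.ae_eq hueq).norm
      simpa [Real.norm_eq_abs] using this
    have h := integral_mul_le_Lp_mul_Lq_of_nonneg hcj
      (Eventually.of_forall fun t => Set.indicator_nonneg (fun _ _ => zero_le_one) t)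
      (Eventually.of_forall fun t => abs_nonneg (um t)) hf hgm
    have he1 : (fun t => s2.indicator (fun _ => (1:ℝ)) t * |um t|) = u₁ := by
      funext t
      by_cases htm : t ∈ s2
      · simp [hu₁def, Set.indicator_of_mem htm]
      · simp [hu₁def, Set.indicator_of_notMem htm]
    have he2 : (∫ t : ℝ, s2.indicator (fun _ => (1:ℝ)) t ^ (2:ℝ)) = 4 / δ := by
      have : (fun t => s2.indicator (fun _ => (1:ℝ)) t ^ (2:ℝ))
          = fun t => s2.indicator (fun _ => (1:ℝ)) t := by
        funext t
        by_cases htm : t ∈ s2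
        · simp [Set.indicator_of_mem htm]
        · simp [Set.indicator_of_notMem htm]
      rw [this, integral_indicator_const (1:ℝ) measurableSet_Icc, measureReal_def, ← hs2def, hvol2, smul_eq_mul, mul_one]
    have he3 : (∫ t : ℝ, |um t| ^ (2:ℝ)) = ∫ t : ℝ, u t ^ 2 := by
      rw [show (fun t => |um t| ^ (2:ℝ)) = fun t => um t ^ 2 by
        funext t; rw [Real.rpow_two, sq_abs]]
      exact integral_congr_ae (by filter_upwards [hueq] with t ht; rw [ht])
    rw [he1, he2, he3] at h
    have he4 : ((4:ℝ) / δ) ^ ((1:ℝ)/2) = 2 / Real.sqrt δ := by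
      rw [← Real.sqrt_eq_rpow]
      rw [show (4:ℝ) / δ = (2 / Real.sqrt δ) ^ 2 by
        rw [div_pow]; rw [Real.sq_sqrt hδ.le]; norm_num]
      exact Real.sqrt_sq (by positivity)
    rw [he4] at h
    calc (∫ t : ℝ, u₁ t) ≤ 2 / Real.sqrt δ * (∫ t : ℝ, u t ^ 2) ^ ((1:ℝ)/2) := h
      _ = 2 / Real.sqrt δ * L2 u := by rw [L2]
  -- kernel k
  set k : ℝ → ℝ → ℝ := fun y t => δ⁻¹ * φ ((y - t) / δ) with hkdef
  have hknn : ∀ y t, 0 ≤ k y t := fun y t => mul_nonneg (by positivity) (hφ0 _)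
  have hkcont_t : ∀ y, Continuous (fun t => k y t) := fun y =>
    continuous_const.mul (hφc.comp ((continuous_const.sub continuous_id).div_const δ))
  have hkcont_y : ∀ t, Continuous (fun y => k y t) := fun t =>
    continuous_const.mul (hφc.comp ((continuous_id.sub continuous_const).div_const δ))
  have hkub : ∀ y t, k y t ≤ δ⁻¹ * Mφ := fun y t =>
    mul_le_mul_of_nonneg_left (le_trans (le_abs_self _) (hMφ _)) (by positivity)
  have hku₁int : ∀ y, Integrable (fun t => k y t * u₁ t) volume := by
    intro y
    refine (hu₁int.const_mul (δ⁻¹ * Mφ)).mono'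
      ((hkcont_t y).aestronglyMeasurable.mul hu₁m.aestronglyMeasurable)
      (Eventually.of_forall fun t => ?_)
    rw [Real.norm_eq_abs, abs_mul, abs_of_nonneg (hknn y t), abs_of_nonneg (hu₁nn t)]
    exact mul_le_mul_of_nonneg_right (hkub y t) (hu₁nn t)
  set P : ℝ → ℝ := fun y => ∫ t : ℝ, k y t * u₁ t with hPdef
  have hPnn : ∀ y, 0 ≤ P y := fun y =>
    integral_nonneg fun t => mul_nonneg (hknn _ _) (hu₁nn t)
  have hPcont : Continuous P := by
    apply continuous_of_dominated (bound := fun t => δ⁻¹ * Mφ * u₁ t)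
    · exact fun y => ((hkcont_t y).aestronglyMeasurable.mul hu₁m.aestronglyMeasurable)
    · intro y
      refine Eventually.of_forall fun t => ?_
      rw [Real.norm_eq_abs, abs_mul, abs_of_nonneg (hknn y t), abs_of_nonneg (hu₁nn t)]
      exact mul_le_mul_of_nonneg_right (hkub y t) (hu₁nn t)
    · exact hu₁int.const_mul _
    · exact Eventually.of_forall fun t => (hkcont_y t).mul continuous_const
  -- pointwise bound on Jmol
  have hJ : ∀ y : ℝ, |y| ≤ 1 / δ → |Jmol φ δ v y| ≤ 2 / Real.sqrt δ * P y := by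
    intro y hy
    have step1 : |Jmol φ δ v y| ≤ ∫ t : ℝ, k y t * |v t| := by
      rw [Jmol]
      calc |∫ t : ℝ, δ⁻¹ * φ ((y - t) / δ) * v t|
          = ‖∫ t : ℝ, δ⁻¹ * φ ((y - t) / δ) * v t‖ := (Real.norm_eq_abs _).symm
        _ ≤ ∫ t : ℝ, ‖δ⁻¹ * φ ((y - t) / δ) * v t‖ :=
            norm_integral_le_integral_norm _
        _ = ∫ t : ℝ, k y t * |v t| := by
            congr 1; funext t
            rw [Real.norm_eq_abs, abs_mul, abs_mul,
              abs_of_nonneg (by positivity : (0:ℝ) ≤ δ⁻¹), abs_of_nonneg (hφ0 _)]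
    refine le_trans step1 ?_
    have step2 : (∫ t : ℝ, k y t * |v t|)
        ≤ ∫ t : ℝ, 2 / Real.sqrt δ * (k y t * u₁ t) := by
      apply integral_mono_of_nonneg
        (Eventually.of_forall fun t => mul_nonneg (hknn y t) (abs_nonneg _))
        ((hku₁int y).const_mul _)
      filter_upwards [hueq] with t htu
      by_cases hφz : φ ((y - t) / δ) = 0
      · simp [hkdef, hφz]
      · have hmem : (y - t) / δ ∈ Set.Ioo (-1:ℝ) 1 := by
          by_contra hc; exact hφz (hφsupp _ hc)
        rw [Set.mem_Ioo] at hmem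
        have habsyt : |y - t| < δ := by
          have h1 : |(y - t) / δ| < 1 := abs_lt.mpr hmem
          rw [abs_div, abs_of_pos hδ, div_lt_one hδ] at h1; exact h1
        have ht2 : |t| ≤ 2 / δ := by
          have h2 : |t| ≤ |y| + |y - t| := by
            calc |t| = |y - (y - t)| := by ring_nf
              _ ≤ |y| + |y - t| := abs_sub _ _
          have h3 : (2:ℝ) / δ = 2 * (1 / δ) := by ring
          linarith
        have htin : t ∈ s2 := by
          rw [hs2def, Set.mem_Icc]
          constructor <;> [linarith [abs_le.mp ht2]; linarith [(abs_le.mp ht2).2]]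
        have hu₁t : u₁ t = |u t| := by
          simp only [hu₁def, Set.indicator_of_mem htin]
          rw [htu]
        rw [hu₁t]
        calc k y t * |v t| ≤ k y t * (2 / Real.sqrt δ * |u t|) :=
              mul_le_mul_of_nonneg_left (hvb t ht2) (hknn y t)
          _ = 2 / Real.sqrt δ * (k y t * |u t|) := by ring
    refine le_trans step2 (le_of_eq ?_)
    rw [integral_const_mul]
  -- outer pointwise bound
  have hχz : ∀ y : ℝ, 1 / δ < |y| → χ (δ * y) = 0 := by
    intro y hy
    apply hχsupp
    intro hmem
    rw [Set.mem_Icc] at hmem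
    have h1 : |δ * y| ≤ 1 := abs_le.mpr hmem
    rw [abs_mul, abs_of_pos hδ] at h1
    have h2 : δ * (1 / δ) < δ * |y| := mul_lt_mul_of_pos_left hy hδ
    have h3 : δ * (1 / δ) = 1 := by field_simp
    linarith
  have hgH : ∀ y : ℝ, |χ (δ * y) * Jmol φ δ v y|
      ≤ s1.indicator (fun y => 2 / Real.sqrt δ * P y) y := by
    intro y
    by_cases hy : |y| ≤ 1 / δ
    · have hmem : y ∈ s1 := by
        rw [hs1def, Set.mem_Icc]
        exact ⟨(abs_le.mp hy).1, (abs_le.mp hy).2⟩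
      rw [Set.indicator_of_mem hmem, abs_mul]
      have hχle : |χ (δ * y)| ≤ 1 := by
        rw [abs_of_nonneg (hχ01 (δ * y)).1]; exact (hχ01 (δ * y)).2
      calc |χ (δ * y)| * |Jmol φ δ v y| ≤ 1 * (2 / Real.sqrt δ * P y) := by
            apply mul_le_mul hχle (hJ y hy) (abs_nonneg _) zero_le_one
        _ = 2 / Real.sqrt δ * P y := one_mul _
    · push_neg at hy
      have hmem : y ∉ s1 := by
        rw [hs1def, Set.mem_Icc]
        intro hc
        have : |y| ≤ 1 / δ := abs_le.mpr hc
        linarith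
      rw [Set.indicator_of_notMem hmem, hχz y hy]
      simp
  have hHint : Integrable (s1.indicator (fun y => 2 / Real.sqrt δ * P y)) volume := by
    rw [integrable_indicator_iff measurableSet_Icc]
    exact (continuous_const.mul hPcont).integrableOn_Icc
  -- Fubini
  have hQint : Integrable (fun p : ℝ × ℝ => k p.1 p.2 * u₁ p.2)
      ((volume.restrict s1).prod volume) := by
    have hQm : AEStronglyMeasurable (fun p : ℝ × ℝ => k p.1 p.2 * u₁ p.2)
        ((volume.restrict s1).prod volume) := by
      exact ((continuous_const.mul
        (hφc.comp ((continuous_fst.sub continuous_snd).div_const δ))).aestronglyMeasurable).mul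
        ((hu₁m.comp measurable_snd).aestronglyMeasurable)
    rw [integrable_prod_iff hQm]
    refine ⟨Eventually.of_forall fun y => hku₁int y, ?_⟩
    have heq : (fun y => ∫ t : ℝ, ‖k y t * u₁ t‖) = P := by
      funext y
      rw [hPdef]
      congr 1; funext t
      rw [Real.norm_eq_abs, abs_of_nonneg (mul_nonneg (hknn y t) (hu₁nn t))]
    rw [heq]
    exact hPcont.integrableOn_Icc
  have hswap := integral_integral_swap (f := fun y t => k y t * u₁ t) hQint
  have hct : ∀ t : ℝ, (∫ y in s1, k y t) ≤ 1 := by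
    intro t
    have hkint : Integrable (fun y => k y t) volume := by
      apply (hkcont_y t).integrable_of_hasCompactSupport
      apply HasCompactSupport.intro (isCompact_Icc (a := t - δ) (b := t + δ))
      intro y hy
      have hnm : (y - t) / δ ∉ Set.Ioo (-1:ℝ) 1 := by
        intro hmem
        rw [Set.mem_Ioo] at hmem
        apply hy
        have h1 : -δ < y - t := by
          have := hmem.1
          rw [lt_div_iff₀ hδ] at this
          linarith
        have h2 : y - t < δ := by
          have := hmem.2
          rw [div_lt_one hδ] at this
          linarith
        exact Set.mem_Icc.mpr ⟨by linarith, by linarith⟩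
      simp [hkdef, hφsupp _ hnm]
    have hint1 : (∫ y : ℝ, k y t) = 1 := by
      have h2 : (∫ y : ℝ, φ ((y - t) / δ)) = ∫ y : ℝ, φ (y / δ) :=
        integral_sub_right_eq_self (fun s => φ (s / δ)) t
      have h1 : (∫ y : ℝ, φ ((y - t) / δ)) = δ := by
        rw [h2, MeasureTheory.Measure.integral_comp_div φ δ, hφint,
          abs_of_pos hδ, smul_eq_mul, mul_one]
      rw [hkdef]
      simp only []
      rw [integral_const_mul, h1]
      field_simp
    calc (∫ y in s1, k y t)
        ≤ ∫ y : ℝ, k y t := setIntegral_le_integral hkint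
          (Eventually.of_forall fun y => hknn y t)
      _ = 1 := hint1
  have hfub : (∫ y in s1, P y) ≤ ∫ t : ℝ, u₁ t := by
    have h0 : (∫ y in s1, P y) = ∫ y in s1, ∫ t : ℝ, k y t * u₁ t := rfl
    rw [h0, hswap]
    calc (∫ t : ℝ, ∫ y in s1, k y t * u₁ t)
        = ∫ t : ℝ, (∫ y in s1, k y t) * u₁ t := by
          congr 1; funext t
          exact integral_mul_const (u₁ t) (fun y => k y t)
      _ ≤ ∫ t : ℝ, u₁ t := by
          apply integral_mono_of_nonneg
            (Eventually.of_forall fun t =>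
              mul_nonneg (integral_nonneg fun y => hknn y t) (hu₁nn t))
            hu₁int
            (Eventually.of_forall fun t => ?_)
          calc (∫ y in s1, k y t) * u₁ t ≤ 1 * u₁ t :=
                mul_le_mul_of_nonneg_right (hct t) (hu₁nn t)
            _ = u₁ t := one_mul _
  -- assemble
  calc (∫ y : ℝ, |χ (δ * y) * Jmol φ δ v y|)
      ≤ ∫ y : ℝ, s1.indicator (fun y => 2 / Real.sqrt δ * P y) y :=
        integral_mono_of_nonneg (Eventually.of_forall fun y => abs_nonneg _)
          hHint (Eventually.of_forall hgH)
    _ = ∫ y in s1, 2 / Real.sqrt δ * P y := integral_indicator measurableSet_Icc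
    _ = 2 / Real.sqrt δ * ∫ y in s1, P y := integral_const_mul _ _
    _ ≤ 2 / Real.sqrt δ * ∫ t : ℝ, u₁ t :=
        mul_le_mul_of_nonneg_left hfub (by positivity)
    _ ≤ 2 / Real.sqrt δ * (2 / Real.sqrt δ * L2 u) :=
        mul_le_mul_of_nonneg_left hholder (by positivity)
    _ = 4 / δ * L2 u := by
        rw [show (4:ℝ) / δ = 2 / Real.sqrt δ * (2 / Real.sqrt δ) by
          rw [div_mul_div_comm]
          rw [Real.mul_self_sqrt hδ.le]
          norm_num]
        ring


lemma main_aux (g A : ℝ → ℝ) (δ x M : ℝ) (hδ : 0 < δ) (hδ1 : δ < 1)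
    (hx : 3 / δ ≤ |x|) (hM : 0 ≤ M)
    (hsupp : ∀ y : ℝ, 1 / δ < |y| → g y = 0)
    (hA : ∀ z : ℝ, |z - x| < 1 / δ → A z = 0)
    (hgint : Integrable g → (∫ y : ℝ, |g y|) ≤ 4 / δ * M) :
    iteratedDeriv 3 (fun z => A z - (1 / Real.pi) * ∫ y : ℝ, g y / (z - y)) x
      = (6 / Real.pi) * ∫ y : ℝ, g y / (x - y) ^ 4 ∧
    |iteratedDeriv 3 (fun z => A z - (1 / Real.pi) * ∫ y : ℝ, g y / (z - y)) x|
      ≤ 100 * (δ / x ^ 2) * M := by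
  have hδi : (0:ℝ) < 1 / δ := by positivity
  have hδ1' : (1:ℝ) ≤ 1 / δ := by rw [le_div_iff₀ hδ]; linarith
  have hxpos : (0:ℝ) < |x| := lt_of_lt_of_le (by positivity) hx
  have hx0 : x ≠ 0 := by intro h; rw [h] at hxpos; simp at hxpos
  have hx2 : 9 / δ ^ 2 ≤ x ^ 2 := by
    have h1 : (3 / δ) ^ 2 ≤ |x| ^ 2 := by
      apply pow_le_pow_left₀ (by positivity) hx
    rw [sq_abs] at h1
    calc 9 / δ ^ 2 = (3 / δ) ^ 2 := by ring
      _ ≤ x ^ 2 := h1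
  have hsep : ∀ z y : ℝ, |z - x| < 1 / δ → |y| ≤ 1 / δ → 1 ≤ |z - y| := by
    intro z y hz hy
    have t1 : |z| - |y| ≤ |z - y| := abs_sub_abs_le_abs_sub z y
    have t2 : |x| - |z - x| ≤ |z| := by
      have := abs_sub_abs_le_abs_sub x z
      rw [abs_sub_comm x z] at this
      linarith
    have h3 : 3 / δ = 3 * (1 / δ) := by ring
    have : 1 / δ ≤ |z - y| := by linarith
    linarith
  have hpi : (3:ℝ) < Real.pi := Real.pi_gt_three
  set G : ℝ → ℝ := fun z => A z - (1 / Real.pi) * ∫ y : ℝ, g y / (z - y) with hGdef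
  by_cases hg : Integrable g volume
  · -- integrable case
    have hkey : ∀ m : ℕ, ∀ z : ℝ, |z - x| < 1 / δ →
        HasDerivAt (fun z => ∫ y : ℝ, g y / (z - y) ^ (m + 1))
          (-(m + 1 : ℝ) * ∫ y : ℝ, g y / (z - y) ^ (m + 2)) z := by
      intro m z hz
      exact aux_kernel_deriv g hg (1 / δ) hsupp m z (1 / δ - |z - x|) (by linarith)
        (fun z' y h1 h2 => hsep z' y (by
          have := abs_sub_le z' z x
          linarith) h2)
    have hID : iteratedDeriv 3 G x = (6 / Real.pi) * ∫ y : ℝ, g y / (x - y) ^ 4 := by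
      have := aux_chain (fun z => ∫ y : ℝ, g y / (z - y))
        (fun z => ∫ y : ℝ, g y / (z - y) ^ 2)
        (fun z => ∫ y : ℝ, g y / (z - y) ^ 3)
        (fun z => ∫ y : ℝ, g y / (z - y) ^ 4) G x (1 / δ) hδi
        (fun z hz => by rw [hGdef]; simp only [hA z hz]; ring)
        (fun z hz => by
          have h := hkey 0 z hz
          norm_num at h
          exact h.congr_deriv (by norm_num))
        (fun z hz => by
          have h := hkey 1 z hz
          norm_num at h
          exact h.congr_deriv (by norm_num))
        (fun z hz => by
          have h := hkey 2 z hz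
          norm_num at h
          exact h.congr_deriv (by norm_num))
      exact this
    refine ⟨hID, ?_⟩
    rw [hID]
    -- bound
    have hker : ∀ y : ℝ, |g y / (x - y) ^ 4| ≤ 81 / 16 / x ^ 4 * |g y| := by
      intro y
      by_cases hy : 1 / δ < |y|
      · simp [hsupp y hy]
      · push_neg at hy
        have h1 : 2 / 3 * |x| ≤ |x - y| := by
          have t1 : |x| - |y| ≤ |x - y| := abs_sub_abs_le_abs_sub x y
          have h3 : 3 / δ = 3 * (1 / δ) := by ring
          have : 1 / δ ≤ 1 / 3 * |x| := by linarith
          linarith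
        have h2 : (2 / 3 * |x|) ^ 4 ≤ |x - y| ^ 4 :=
          pow_le_pow_left₀ (by positivity) h1 4
        have h3 : (0:ℝ) < (2 / 3 * |x|) ^ 4 := by positivity
        rw [abs_div, abs_pow]
        rw [div_le_iff₀ (lt_of_lt_of_le h3 h2)]
        have hx4 : |x| ^ 4 = x ^ 4 := by
          rw [show (4:ℕ) = 2 * 2 from rfl, pow_mul, pow_mul, sq_abs]
        calc |g y| = 81 / 16 / x ^ 4 * |g y| * ((2 / 3 * |x|) ^ 4) := by
              field_simp
              rw [← hx4]; ring
          _ ≤ 81 / 16 / x ^ 4 * |g y| * |x - y| ^ 4 := by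
              apply mul_le_mul_of_nonneg_left h2
              have : (0:ℝ) < x ^ 4 := by rw [← hx4]; positivity
              positivity
    have hstep1 : |∫ y : ℝ, g y / (x - y) ^ 4| ≤ 81 / 16 / x ^ 4 * ∫ y : ℝ, |g y| := by
      calc |∫ y : ℝ, g y / (x - y) ^ 4| ≤ ∫ y : ℝ, |g y / (x - y) ^ 4| := by
            simpa [Real.norm_eq_abs] using
              norm_integral_le_integral_norm (fun y : ℝ => g y / (x - y) ^ 4)
        _ ≤ ∫ y : ℝ, 81 / 16 / x ^ 4 * |g y| :=
            integral_mono_of_nonneg (Eventually.of_forall fun y => abs_nonneg _)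
              (hg.abs.const_mul _) (Eventually.of_forall hker)
        _ = 81 / 16 / x ^ 4 * ∫ y : ℝ, |g y| := integral_const_mul _ _
    have hgi := hgint hg
    have hx4pos : (0:ℝ) < x ^ 4 := by positivity
    have hgnn : (0:ℝ) ≤ ∫ y : ℝ, |g y| := integral_nonneg fun y => abs_nonneg _
    rw [abs_mul]
    have h6pi : |6 / Real.pi| ≤ 2 := by
      rw [abs_of_pos (by positivity)]
      rw [div_le_iff₀ (by linarith)]
      linarith
    calc |6 / Real.pi| * |∫ y : ℝ, g y / (x - y) ^ 4|
        ≤ 2 * (81 / 16 / x ^ 4 * (4 / δ * M)) := by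
          apply mul_le_mul h6pi _ (abs_nonneg _) (by norm_num)
          refine le_trans hstep1 ?_
          apply mul_le_mul_of_nonneg_left hgi (by positivity)
      _ ≤ 100 * (δ / x ^ 2) * M := by
          rw [show x ^ 4 = x ^ 2 * x ^ 2 by ring]
          have hd2 : (0:ℝ) < δ ^ 2 := by positivity
          have hx2pos : (0:ℝ) < x ^ 2 := by positivity
          have hinv : 1 / (x ^ 2) ≤ δ ^ 2 / 9 := by
            rw [div_le_div_iff₀ hx2pos (by norm_num)]
            have : 9 / δ ^ 2 * δ ^ 2 ≤ x ^ 2 * δ ^ 2 :=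
              mul_le_mul_of_nonneg_right hx2 (le_of_lt hd2)
            calc (1:ℝ) * 9 = 9 / δ ^ 2 * δ ^ 2 := by field_simp
              _ ≤ x ^ 2 * δ ^ 2 := this
              _ = δ ^ 2 * x ^ 2 := by ring
          calc 2 * (81 / 16 / (x ^ 2 * x ^ 2) * (4 / δ * M))
              = (81 / 2) * (1 / x ^ 2) * (1 / x ^ 2) * (1 / δ) * M := by
                field_simp; ring
            _ ≤ (81 / 2) * (δ ^ 2 / 9) * (1 / x ^ 2) * (1 / δ) * M := by
                apply mul_le_mul_of_nonneg_right _ hM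
                apply mul_le_mul_of_nonneg_right _ (by positivity)
                apply mul_le_mul_of_nonneg_right _ (by positivity)
                exact mul_le_mul_of_nonneg_left hinv (by norm_num)
            _ = (9 / 2) * (δ / x ^ 2) * M := by field_simp; ring
            _ ≤ 100 * (δ / x ^ 2) * M := by
                apply mul_le_mul_of_nonneg_right _ hM
                apply mul_le_mul_of_nonneg_right _ (by positivity)
                norm_num
  · -- non-integrable case: all kernel integrals are junk 0
    have hnint : ∀ z : ℝ, |z - x| < 1 / δ → ¬ Integrable (fun y => g y / (z - y)) volume := by
      intro z hz hint
      apply hg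
      have hzae : ∀ᵐ y : ℝ, y ≠ z := by
        have h0 : volume ({z} : Set ℝ) = 0 := measure_singleton z
        have := measure_eq_zero_iff_ae_notMem.mp h0
        filter_upwards [this] with y hy
        simpa using hy
      have hmeas : AEStronglyMeasurable g volume := by
        have heq : (fun y => (z - y) * (g y / (z - y))) =ᵐ[volume] g := by
          filter_upwards [hzae] with y hy
          have : z - y ≠ 0 := sub_ne_zero.mpr (Ne.symm hy)
          field_simp
        exact (((continuous_const.sub continuous_id).aestronglyMeasurable).mul hint.1).congr heq
      refine (hint.norm.const_mul (|z| + 1 / δ)).mono' hmeas ?_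
      filter_upwards [hzae] with y hy
      by_cases hyR : 1 / δ < |y|
      · simp only [hsupp y hyR, Real.norm_eq_abs, abs_zero]
        positivity
      · push_neg at hyR
        have hne : z - y ≠ 0 := sub_ne_zero.mpr (Ne.symm hy)
        have h2 : 0 < |z - y| := abs_pos.mpr hne
        have h1 : |z - y| ≤ |z| + 1 / δ := le_trans (abs_sub z y) (by linarith)
        rw [Real.norm_eq_abs, Real.norm_eq_abs, abs_div]
        calc |g y| = |z - y| * (|g y| / |z - y|) := by field_simp
          _ ≤ (|z| + 1 / δ) * (|g y| / |z - y|) :=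
            mul_le_mul_of_nonneg_right h1 (by positivity)
    have hnint4 : ¬ Integrable (fun y => g y / (x - y) ^ 4) volume := by
      intro hint
      apply hg
      have hzae : ∀ᵐ y : ℝ, y ≠ x := by
        have h0 : volume ({x} : Set ℝ) = 0 := measure_singleton x
        have := measure_eq_zero_iff_ae_notMem.mp h0
        filter_upwards [this] with y hy
        simpa using hy
      have hmeas : AEStronglyMeasurable g volume := by
        have heq : (fun y => (x - y) ^ 4 * (g y / (x - y) ^ 4)) =ᵐ[volume] g := by
          filter_upwards [hzae] with y hy
          have : x - y ≠ 0 := sub_ne_zero.mpr (Ne.symm hy)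
          field_simp
        exact ((((continuous_const.sub continuous_id).pow 4).aestronglyMeasurable).mul
          hint.1).congr heq
      refine (hint.norm.const_mul ((|x| + 1 / δ) ^ 4)).mono' hmeas ?_
      filter_upwards [hzae] with y hy
      by_cases hyR : 1 / δ < |y|
      · simp only [hsupp y hyR, Real.norm_eq_abs, abs_zero]
        positivity
      · push_neg at hyR
        have hne : x - y ≠ 0 := sub_ne_zero.mpr (Ne.symm hy)
        have h2 : 0 < |x - y| := abs_pos.mpr hne
        have h1 : |x - y| ≤ |x| + 1 / δ := le_trans (abs_sub x y) (by linarith)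
        have h1' : |x - y| ^ 4 ≤ (|x| + 1 / δ) ^ 4 := pow_le_pow_left₀ (abs_nonneg _) h1 4
        have h2' : (0:ℝ) < |x - y| ^ 4 := by positivity
        rw [Real.norm_eq_abs, Real.norm_eq_abs, abs_div, abs_pow]
        calc |g y| = |x - y| ^ 4 * (|g y| / |x - y| ^ 4) := by field_simp
          _ ≤ (|x| + 1 / δ) ^ 4 * (|g y| / |x - y| ^ 4) :=
            mul_le_mul_of_nonneg_right h1' (by positivity)
    have hF40 : (∫ y : ℝ, g y / (x - y) ^ 4) = 0 := integral_undef hnint4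
    have hG0 : ∀ z : ℝ, |z - x| < 1 / δ → G z = -((1 / Real.pi) * (0:ℝ)) := by
      intro z hz
      rw [hGdef]
      simp only [hA z hz, integral_undef (hnint z hz)]
      ring
    have hID : iteratedDeriv 3 G x = (6 / Real.pi) * (0:ℝ) := by
      apply aux_chain (fun _ => (0:ℝ)) (fun _ => (0:ℝ)) (fun _ => (0:ℝ)) (fun _ => (0:ℝ))
        G x (1 / δ) hδi hG0
      all_goals intro z hz; simpa using hasDerivAt_const z (0:ℝ)
    constructor
    · rw [hID, hF40]
    · rw [hID]
      simp only [mul_zero, abs_zero]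
      positivity

/-- for `|x| ≥ 3/δ` the commutator `[χ_δ, iℍ]J_δ v` (which there equals
`χ_δ(x)·iℍ(J_δv)(x) - (1/π)∫ χ_δ(y)(x-y)⁻¹ J_δv(y) dy`, the second integral being
non-singular) satisfies the kernel identity
`([χ_δ, iℍ]J_δ v)_{xxx}(x) = (6/π)∫ χ_δ(y)(x-y)^{-4} J_δv(y) dy` and the bound
`|([χ_δ, iℍ]J_δ v)_{xxx}(x)| ≲ (δ/x²)‖v‖_{L²_w}`, for `w ≳ (1+x²)^{-1/1000}`. -/
theorem stmt17 : ∃ C : ℝ, 0 < C ∧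
    ∀ (φ χ w v Hjv : ℝ → ℝ) (δ : ℝ), 0 < δ → δ < 1 →
    ContDiff ℝ (⊤ : ℕ∞) φ → (∀ x, 0 ≤ φ x) → (∀ x : ℝ, x ∉ Set.Ioo (-1 : ℝ) 1 → φ x = 0) →
    (∫ x : ℝ, φ x) = 1 →
    ContDiff ℝ (⊤ : ℕ∞) χ → (∀ x, 0 ≤ χ x ∧ χ x ≤ 1) →
    (∀ x ∈ Set.Icc (-(1 / 2) : ℝ) (1 / 2), χ x = 1) →
    (∀ x : ℝ, x ∉ Set.Icc (-1 : ℝ) 1 → χ x = 0) →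
    (∀ x : ℝ, (1 + x ^ 2) ^ (-(1 / 1000) : ℝ) ≤ w x) →
    MemLp (fun x => Real.sqrt (w x) * v x) 2 volume →
    -- `Hjv = iℍ(J_δ v)` via principal values:
    (∀ᵐ x : ℝ, Tendsto (fun r : ℝ =>
        (1 / Real.pi) * ∫ y in {y : ℝ | r ≤ |x - y|}, Jmol φ δ v y / (x - y))
      (nhdsWithin 0 (Set.Ioi 0)) (nhds (Hjv x))) →
    ∀ x : ℝ, 3 / δ ≤ |x| →
      iteratedDeriv 3 (fun z => χ (δ * z) * Hjv z
          - (1 / Real.pi) * ∫ y : ℝ, χ (δ * y) * Jmol φ δ v y / (z - y)) x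
        = (6 / Real.pi) * (∫ y : ℝ, χ (δ * y) * Jmol φ δ v y / (x - y) ^ 4) ∧
      |iteratedDeriv 3 (fun z => χ (δ * z) * Hjv z
          - (1 / Real.pi) * ∫ y : ℝ, χ (δ * y) * Jmol φ δ v y / (z - y)) x|
        ≤ C * (δ / x ^ 2) * L2 (fun y => Real.sqrt (w y) * v y) := by
  refine ⟨100, by norm_num, ?_⟩
  intro φ χ w v Hjv δ hδ hδ1 hφs hφ0 hφsupp hφint hχs hχ01 hχ1 hχsupp hw hu hH x hx
  have hsupp : ∀ y : ℝ, 1 / δ < |y| → χ (δ * y) * Jmol φ δ v y = 0 := by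
    intro y hy
    have hz : χ (δ * y) = 0 := by
      apply hχsupp; intro hmem
      rw [Set.mem_Icc] at hmem
      have h1 : |δ * y| ≤ 1 := abs_le.mpr hmem
      rw [abs_mul, abs_of_pos hδ] at h1
      have h2 : δ * (1 / δ) < δ * |y| := mul_lt_mul_of_pos_left hy hδ
      have h3 : δ * (1 / δ) = 1 := by field_simp
      linarith
    rw [hz, zero_mul]
  have hA : ∀ z : ℝ, |z - x| < 1 / δ → χ (δ * z) * Hjv z = 0 := by
    intro z hz
    have hzl : 2 / δ ≤ |z| := by
      have t2 : |x| - |z - x| ≤ |z| := by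
        have h := abs_sub_abs_le_abs_sub x z
        rw [abs_sub_comm x z] at h; linarith
      have h3 : 3 / δ = 3 * (1 / δ) := by ring
      have h2 : 2 / δ = 2 * (1 / δ) := by ring
      linarith [hx]
    have hz0 : χ (δ * z) = 0 := by
      apply hχsupp; intro hmem
      rw [Set.mem_Icc] at hmem
      have h1 : |δ * z| ≤ 1 := abs_le.mpr hmem
      rw [abs_mul, abs_of_pos hδ] at h1
      have h2 : δ * (2 / δ) ≤ δ * |z| := mul_le_mul_of_nonneg_left hzl hδ.le
      have h3 : δ * (2 / δ) = 2 := by field_simp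
      linarith
    rw [hz0, zero_mul]
  have hM : 0 ≤ L2 (fun y => Real.sqrt (w y) * v y) :=
    Real.rpow_nonneg (integral_nonneg fun t => sq_nonneg _) _
  exact main_aux (fun y => χ (δ * y) * Jmol φ δ v y) (fun z => χ (δ * z) * Hjv z)
    δ x (L2 (fun y => Real.sqrt (w y) * v y)) hδ hδ1 hx hM hsupp hA
    (fun _ => aux_L1_bound φ χ w v δ hδ hδ1 hφs.continuous hφ0 hφsupp hφint hχ01 hχsupp hw hu)
end
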